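/- arXiv:1601.08077 — 3 statements merged into one kernel-verified Lean document; each statement's English description precedes it below -/
import Mathlib

section
/- Let ψ : M(n+1,k,ℝ) → 𝕊 be smooth with E_iψ := Σ_{α=1}^{n+1} ε_α·∂_{x_{αi}}ψ = 0 for all i = 1,…,k. Then the restriction ψ̂ := ψ|_{M(n,k,ℝ)} to the subspace {x_{n+1,1} = … = x_{n+1,k} = 0} satisfies [Ê_i, Ê_j] ψ̂ = 0 for all i, j = 1,…,k, where Ê_i := Σ_{α=1}^{n} ε_α·∂_{x_{αi}} and the bracket is the commutator of operators. -/
/-- The spinor space `𝕊 = ℂ^m`. -/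
abbrev S (m : ℕ) := Fin m → ℂ

/-- Clifford multiplication by `ε_α`. -/
noncomputable def cl {n m : ℕ} (ε : Fin (n + 1) → Matrix (Fin m) (Fin m) ℂ)
    (α : Fin (n + 1)) (s : S m) : S m := (ε α).mulVec s

/-- Partial derivative along the coordinate `v`. -/
noncomputable def pdf {ι : Type*} [Fintype ι] [DecidableEq ι] {m : ℕ}
    (v : ι) (ψ : (ι → ℝ) → S m) (q : ι → ℝ) : S m :=
  fderiv ℝ ψ q (Pi.single v 1)

/-- `E_i = Σ_{α=1}^{n+1} ε_α · ∂_{x_{αi}}` on `M(n+1,k,ℝ)`. -/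
noncomputable def Eop {n k m : ℕ} (ε : Fin (n + 1) → Matrix (Fin m) (Fin m) ℂ) (i : Fin k)
    (ψ : ((Fin (n + 1) × Fin k) → ℝ) → S m) (q : (Fin (n + 1) × Fin k) → ℝ) : S m :=
  ∑ α : Fin (n + 1), cl ε α (pdf (α, i) ψ q)

/-- `Ê_i = Σ_{α=1}^{n} ε_α · ∂_{x_{αi}}` on `M(n,k,ℝ)`. -/
noncomputable def Ehat {n k m : ℕ} (ε : Fin (n + 1) → Matrix (Fin m) (Fin m) ℂ) (i : Fin k)
    (φ : ((Fin n × Fin k) → ℝ) → S m) (q : (Fin n × Fin k) → ℝ) : S m :=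
  ∑ α : Fin n, cl ε α.castSucc (pdf (α, i) φ q)

/-- Inclusion `M(n,k,ℝ) ↪ M(n+1,k,ℝ)` as the subspace `{x_{n+1,1} = … = x_{n+1,k} = 0}`. -/
def incl {n k : ℕ} (q : (Fin n × Fin k) → ℝ) : (Fin (n + 1) × Fin k) → ℝ :=
  fun v => if h : (v.1 : ℕ) < n then q (⟨v.1, h⟩, v.2) else 0

/-! ### Auxiliary constructions -/

/-- `incl` as a continuous linear map. -/
noncomputable def inclL (n k : ℕ) : ((Fin n × Fin k) → ℝ) →L[ℝ] ((Fin (n + 1) × Fin k) → ℝ) :=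
  LinearMap.toContinuousLinearMap
    { toFun := incl
      map_add' := by
        intro x y; funext v; simp only [incl, Pi.add_apply]; split <;> simp
      map_smul' := by
        intro c x; funext v
        simp only [incl, RingHom.id_apply, Pi.smul_apply]; split <;> simp }

lemma inclL_apply {n k : ℕ} (q : (Fin n × Fin k) → ℝ) : inclL n k q = incl q := rfl

lemma incl_single {n k : ℕ} (α : Fin n) (i : Fin k) :
    incl (Pi.single ((α, i) : Fin n × Fin k) (1 : ℝ)) =
      Pi.single ((α.castSucc, i) : Fin (n + 1) × Fin k) 1 := by
  funext v
  rcases v with ⟨a, b⟩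
  have ha := α.isLt
  simp only [incl, Pi.single_apply, Prod.ext_iff, Fin.ext_iff, Fin.coe_castSucc]
  split_ifs <;> simp_all <;> omega

/-- `cl ε α` as a continuous `ℝ`-linear map. -/
noncomputable def clL {n m : ℕ} (ε : Fin (n + 1) → Matrix (Fin m) (Fin m) ℂ)
    (α : Fin (n + 1)) : S m →L[ℝ] S m :=
  LinearMap.toContinuousLinearMap (((ε α).mulVecLin).restrictScalars ℝ)

lemma clL_apply {n m : ℕ} (ε : Fin (n + 1) → Matrix (Fin m) (Fin m) ℂ)
    (α : Fin (n + 1)) (s : S m) : clL ε α s = cl ε α s := rfl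

/-! ### Calculus lemmas about `pdf` -/

lemma contDiff_pdf {ι : Type*} [Fintype ι] [DecidableEq ι] {m : ℕ}
    (v : ι) {ψ : (ι → ℝ) → S m} (hψ : ContDiff ℝ (⊤ : ℕ∞) ψ) :
    ContDiff ℝ (⊤ : ℕ∞) (pdf v ψ) :=
  (hψ.fderiv_right (by simp)).clm_apply contDiff_const

lemma pdf_comp_incl {n k m : ℕ} {ψ : ((Fin (n + 1) × Fin k) → ℝ) → S m}
    (hψ : ContDiff ℝ (⊤ : ℕ∞) ψ) (α : Fin n) (i : Fin k) (q : (Fin n × Fin k) → ℝ) :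
    pdf (α, i) (ψ ∘ incl) q = pdf (α.castSucc, i) ψ (incl q) := by
  have h1 : (ψ ∘ incl) = ψ ∘ (inclL n k) := rfl
  unfold pdf
  rw [h1, fderiv_comp q (hψ.differentiable (by simp) _) (inclL n k).differentiableAt,
    (inclL n k).fderiv]
  simp only [ContinuousLinearMap.coe_comp', Function.comp_apply, inclL_apply, incl_single]

lemma pdf_cl {n k m : ℕ} (ε : Fin (n + 1) → Matrix (Fin m) (Fin m) ℂ) (β : Fin (n + 1))
    {φ : ((Fin (n + 1) × Fin k) → ℝ) → S m} {q : (Fin (n + 1) × Fin k) → ℝ}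
    (hφ : DifferentiableAt ℝ φ q) (v : Fin (n + 1) × Fin k) :
    pdf v (fun p => cl ε β (φ p)) q = cl ε β (pdf v φ q) := by
  have h1 : (fun p => cl ε β (φ p)) = (clL ε β) ∘ φ := rfl
  unfold pdf
  rw [h1, fderiv_comp q (clL ε β).differentiableAt hφ, (clL ε β).fderiv]
  rfl

lemma pdf_neg {ι : Type*} [Fintype ι] [DecidableEq ι] {m : ℕ}
    (v : ι) (φ : (ι → ℝ) → S m) (q : ι → ℝ) :
    pdf v (fun p => -(φ p)) q = -(pdf v φ q) := by
  unfold pdf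
  rw [fderiv_fun_neg]
  rfl

lemma pdf_symm {ι : Type*} [Fintype ι] [DecidableEq ι] {m : ℕ}
    (u v : ι) {ψ : (ι → ℝ) → S m} (hψ : ContDiff ℝ (⊤ : ℕ∞) ψ) (q : ι → ℝ) :
    pdf u (pdf v ψ) q = pdf v (pdf u ψ) q := by
  have hd : DifferentiableAt ℝ (fderiv ℝ ψ) q :=
    ((hψ.fderiv_right (m := 1) (by exact WithTop.coe_le_coe.mpr le_top)).differentiable one_ne_zero) q
  have key : ∀ w : ι → ℝ,
      fderiv ℝ (fun x => fderiv ℝ ψ x w) q =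
        (ContinuousLinearMap.apply ℝ (S m) w).comp (fderiv ℝ (fderiv ℝ ψ) q) := by
    intro w
    have h1 : (fun x => fderiv ℝ ψ x w) =
        (ContinuousLinearMap.apply ℝ (S m) w) ∘ (fderiv ℝ ψ) := rfl
    rw [h1, fderiv_comp q (ContinuousLinearMap.apply ℝ (S m) w).differentiableAt hd,
      (ContinuousLinearMap.apply ℝ (S m) w).fderiv]
  unfold pdf
  rw [key, key]
  simp only [ContinuousLinearMap.coe_comp', Function.comp_apply,
    ContinuousLinearMap.apply_apply]
  exact second_derivative_symmetric
    (fun y => (hψ.differentiable (by simp) y).hasFDerivAt) hd.hasFDerivAt _ _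

lemma pdf_sum {ι : Type*} [Fintype ι] [DecidableEq ι] {m : ℕ} {κ : Type*} (s : Finset κ)
    (v : ι) (φ : κ → (ι → ℝ) → S m) (q : ι → ℝ)
    (hφ : ∀ a ∈ s, DifferentiableAt ℝ (φ a) q) :
    pdf v (fun p => ∑ a ∈ s, φ a p) q = ∑ a ∈ s, pdf v (φ a) q := by
  unfold pdf
  rw [fderiv_fun_sum hφ, ContinuousLinearMap.sum_apply]

/-! ### Clifford algebra consequences -/

lemma cl_anticomm {n m : ℕ} {ε : Fin (n + 1) → Matrix (Fin m) (Fin m) ℂ}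
    (hcl : ∀ α β, ε α * ε β + ε β * ε α =
      if α = β then (-2 : ℂ) • (1 : Matrix (Fin m) (Fin m) ℂ) else 0)
    {α β : Fin (n + 1)} (hab : α ≠ β) (s : S m) :
    cl ε α (cl ε β s) = -cl ε β (cl ε α s) := by
  have h := hcl α β
  rw [if_neg hab] at h
  have h2 : ε α * ε β = -(ε β * ε α) := by
    rw [eq_neg_iff_add_eq_zero]; exact h
  unfold cl
  rw [Matrix.mulVec_mulVec, Matrix.mulVec_mulVec, h2, Matrix.neg_mulVec]

lemma cl_sq {n m : ℕ} {ε : Fin (n + 1) → Matrix (Fin m) (Fin m) ℂ}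
    (hcl : ∀ α β, ε α * ε β + ε β * ε α =
      if α = β then (-2 : ℂ) • (1 : Matrix (Fin m) (Fin m) ℂ) else 0)
    (α : Fin (n + 1)) (s : S m) :
    cl ε α (cl ε α s) = -s := by
  have h := hcl α α
  rw [if_pos rfl] at h
  have h2 : ε α * ε α = (-1 : ℂ) • (1 : Matrix (Fin m) (Fin m) ℂ) := by
    have h' : (2 : ℂ) • (ε α * ε α) = (-2 : ℂ) • (1 : Matrix (Fin m) (Fin m) ℂ) := by
      rw [two_smul]; exact h
    calc ε α * ε α = (2 : ℂ)⁻¹ • ((2 : ℂ) • (ε α * ε α)) := by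
          rw [smul_smul]; norm_num
      _ = (-1 : ℂ) • (1 : Matrix (Fin m) (Fin m) ℂ) := by
          rw [h', smul_smul]; norm_num
  unfold cl
  rw [Matrix.mulVec_mulVec, h2, Matrix.smul_mulVec, Matrix.one_mulVec, neg_one_smul]

lemma cl_neg {n m : ℕ} (ε : Fin (n + 1) → Matrix (Fin m) (Fin m) ℂ)
    (α : Fin (n + 1)) (s : S m) : cl ε α (-s) = -cl ε α s := by
  unfold cl; rw [Matrix.mulVec_neg]

lemma cl_sum {n m : ℕ} (ε : Fin (n + 1) → Matrix (Fin m) (Fin m) ℂ)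
    (α : Fin (n + 1)) {κ : Type*} (t : Finset κ) (f : κ → S m) :
    cl ε α (∑ a ∈ t, f a) = ∑ a ∈ t, cl ε α (f a) := by
  simp only [← clL_apply, map_sum]

/-! ### Main steps -/

section Main

variable {n k m : ℕ} {ε : Fin (n + 1) → Matrix (Fin m) (Fin m) ℂ}
  {ψ : ((Fin (n + 1) × Fin k) → ℝ) → S m}

/-- First-order consequence of the Dirac equation, valid at every point of the big space. -/
lemma sum_cast_eq_neg_last (hψ : ContDiff ℝ (⊤ : ℕ∞) ψ)
    (hE : ∀ (i : Fin k) (q : (Fin (n + 1) × Fin k) → ℝ), Eop ε i ψ q = 0)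
    (i : Fin k) (p : (Fin (n + 1) × Fin k) → ℝ) :
    ∑ α : Fin n, cl ε α.castSucc (pdf (α.castSucc, i) ψ p) =
      -cl ε (Fin.last n) (pdf (Fin.last n, i) ψ p) := by
  have h := hE i p
  unfold Eop at h
  rw [Fin.sum_univ_castSucc] at h
  exact eq_neg_of_add_eq_zero_left h

lemma ehat_inner (hψ : ContDiff ℝ (⊤ : ℕ∞) ψ)
    (hE : ∀ (i : Fin k) (q : (Fin (n + 1) × Fin k) → ℝ), Eop ε i ψ q = 0) (j : Fin k) :
    Ehat ε j (ψ ∘ incl) =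
      (fun p => -cl ε (Fin.last n) (pdf (Fin.last n, j) ψ p)) ∘ incl := by
  funext q
  unfold Ehat
  simp only [Function.comp_apply]
  calc ∑ α : Fin n, cl ε α.castSucc (pdf (α, j) (ψ ∘ incl) q)
      = ∑ α : Fin n, cl ε α.castSucc (pdf (α.castSucc, j) ψ (incl q)) := by
        refine Finset.sum_congr rfl fun α _ => ?_
        rw [pdf_comp_incl hψ]
    _ = -cl ε (Fin.last n) (pdf (Fin.last n, j) ψ (incl q)) :=
        sum_cast_eq_neg_last hψ hE j (incl q)

lemma double
    (hcl : ∀ α β, ε α * ε β + ε β * ε α =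
      if α = β then (-2 : ℂ) • (1 : Matrix (Fin m) (Fin m) ℂ) else 0)
    (hψ : ContDiff ℝ (⊤ : ℕ∞) ψ)
    (hE : ∀ (i : Fin k) (q : (Fin (n + 1) × Fin k) → ℝ), Eop ε i ψ q = 0)
    (i j : Fin k) (q : (Fin n × Fin k) → ℝ) :
    Ehat ε i (Ehat ε j (ψ ∘ incl)) q =
      pdf (Fin.last n, j) (pdf (Fin.last n, i) ψ) (incl q) := by
  have hDj : ContDiff ℝ (⊤ : ℕ∞) (pdf (Fin.last n, j) ψ) := contDiff_pdf _ hψ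
  have hG : ContDiff ℝ (⊤ : ℕ∞) (fun p => -cl ε (Fin.last n) (pdf (Fin.last n, j) ψ p)) := by
    have h1 : (fun p => cl ε (Fin.last n) (pdf (Fin.last n, j) ψ p)) =
        (clL ε (Fin.last n)) ∘ (pdf (Fin.last n, j) ψ) := rfl
    have := ((clL ε (Fin.last n)).contDiff.comp hDj).neg
    rwa [← h1] at this
  rw [ehat_inner hψ hE j]
  unfold Ehat
  calc ∑ α : Fin n, cl ε α.castSucc
        (pdf (α, i) ((fun p => -cl ε (Fin.last n) (pdf (Fin.last n, j) ψ p)) ∘ incl) q)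
      = ∑ α : Fin n, cl ε (Fin.last n)
          (cl ε α.castSucc (pdf (α.castSucc, i) (pdf (Fin.last n, j) ψ) (incl q))) := by
        refine Finset.sum_congr rfl fun α _ => ?_
        rw [pdf_comp_incl hG α i q, pdf_neg,
          pdf_cl ε _ (hDj.differentiable (by simp) _) _, cl_neg,
          cl_anticomm hcl (Fin.castSucc_lt_last α).ne, neg_neg]
    _ = cl ε (Fin.last n) (∑ α : Fin n,
          cl ε α.castSucc (pdf (α.castSucc, i) (pdf (Fin.last n, j) ψ) (incl q))) :=
        (cl_sum ε (Fin.last n) _ _).symm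
    _ = cl ε (Fin.last n) (∑ α : Fin n, pdf (Fin.last n, j)
          (fun r => cl ε α.castSucc (pdf (α.castSucc, i) ψ r)) (incl q)) := by
        refine congrArg (cl ε (Fin.last n)) ?_
        refine Finset.sum_congr rfl fun α _ => ?_
        rw [pdf_symm (α.castSucc, i) (Fin.last n, j) hψ,
          pdf_cl ε _ ((contDiff_pdf _ hψ).differentiable (by simp) _) _]
    _ = cl ε (Fin.last n) (pdf (Fin.last n, j)
          (fun r => ∑ α : Fin n, cl ε α.castSucc (pdf (α.castSucc, i) ψ r)) (incl q)) := by
        refine congrArg (cl ε (Fin.last n)) ?_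
        refine (pdf_sum Finset.univ _ _ _ fun α _ => ?_).symm
        have h1 : (fun r => cl ε α.castSucc (pdf (α.castSucc, i) ψ r)) =
            (clL ε α.castSucc) ∘ (pdf (α.castSucc, i) ψ) := rfl
        rw [h1]
        exact ((clL ε α.castSucc).contDiff.comp (contDiff_pdf _ hψ)).differentiable (by simp) _
    _ = cl ε (Fin.last n) (pdf (Fin.last n, j)
          (fun r => -cl ε (Fin.last n) (pdf (Fin.last n, i) ψ r)) (incl q)) := by
        have hfun : (fun r => ∑ α : Fin n, cl ε α.castSucc (pdf (α.castSucc, i) ψ r)) =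
            fun r => -cl ε (Fin.last n) (pdf (Fin.last n, i) ψ r) :=
          funext (sum_cast_eq_neg_last hψ hE i)
        rw [hfun]
    _ = cl ε (Fin.last n) (-cl ε (Fin.last n)
          (pdf (Fin.last n, j) (pdf (Fin.last n, i) ψ) (incl q))) := by
        rw [pdf_neg, pdf_cl ε _ ((contDiff_pdf _ hψ).differentiable (by simp) _) _]
    _ = pdf (Fin.last n, j) (pdf (Fin.last n, i) ψ) (incl q) := by
        rw [cl_neg, cl_sq hcl, neg_neg]

end Main

/-- If `E_iψ = 0` for all `i`, then the restriction `ψ̂ = ψ|_{M(n,k,ℝ)}` satisfies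
`[Ê_i, Ê_j] ψ̂ = 0` for all `i, j`. -/
theorem restriction_satisfies_second_order_equations {n k m : ℕ} (hk : 2 ≤ k) (hn : 2 ≤ n)
    (ε : Fin (n + 1) → Matrix (Fin m) (Fin m) ℂ)
    (hcl : ∀ α β, ε α * ε β + ε β * ε α =
      if α = β then (-2 : ℂ) • (1 : Matrix (Fin m) (Fin m) ℂ) else 0)
    (ψ : ((Fin (n + 1) × Fin k) → ℝ) → S m) (hψ : ContDiff ℝ (⊤ : ℕ∞) ψ)
    (hE : ∀ (i : Fin k) (q : (Fin (n + 1) × Fin k) → ℝ), Eop ε i ψ q = 0)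
    (i j : Fin k) (q : (Fin n × Fin k) → ℝ) :
    Ehat ε i (Ehat ε j (ψ ∘ incl)) q - Ehat ε j (Ehat ε i (ψ ∘ incl)) q = 0 := by
  rw [double hcl hψ hE i j q, double hcl hψ hE j i q,
    pdf_symm (Fin.last n, j) (Fin.last n, i) hψ, sub_self]
end

section
/- Let ψ : M(n+1,k,ℝ) → 𝕊 be a polynomial (or real analytic) function with E_iψ = 0 for all i = 1,…,k, where E_i = Σ_{α=1}^{n+1} ε_α·∂_{x_{αi}}. If ψ vanishes identically on the subspace {x_{n+1,1} = … = x_{n+1,k} = 0}, then ψ = 0. In other words, a monogenic function is uniquely determined by its restriction to M(n,k,ℝ). -/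
/-!
Restricting to the real points of the subspace `{x_{n+1,·} = 0}` and using that a complex polynomial
vanishing on `ℝ^N` is zero, every coefficient `c_d` of `ψ` with no last-row exponent vanishes. The
coefficient of `E_i ψ` at `d` is `∑_α (d_{αi} + 1) ε_α c_{d + e_{αi}}`; for `α ≠ n+1` the index
`d + e_{αi}` has the same last-row degree as `d`, so by induction on that degree only the `α = n+1`
term survives, and `ε_{n+1}` is invertible since `ε_{n+1}² = -1`.
-/

open MvPolynomial

/-- `E_i = Σ_α ε_α · ∂_{x_{αi}}` acting on `𝕊`-valued polynomials on `M(n+1,k,ℝ)`,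
where `𝕊 = ℂ^m` and the `ε_α` act via matrices. -/
noncomputable def Epol {n k m : ℕ} (ε : Fin (n + 1) → Matrix (Fin m) (Fin m) ℂ) (i : Fin k)
    (ψ : Fin m → MvPolynomial (Fin (n + 1) × Fin k) ℂ) :
    Fin m → MvPolynomial (Fin (n + 1) × Fin k) ℂ :=
  fun u => ∑ α : Fin (n + 1), ∑ v : Fin m, C (ε α u v) * pderiv (α, i) (ψ v)

open scoped Matrix

theorem MvPolynomial.eq_zero_of_eval_ofReal_eq_zero {σ : Type*} {p : MvPolynomial σ ℂ}
    (h : ∀ q : σ → ℝ, eval (fun v => (q v : ℂ)) p = 0) : p = 0 :=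
  funext_set (fun _ => Set.range Complex.ofReal)
    (fun _ => Set.infinite_range_of_injective Complex.ofReal_injective) fun x hx => by
    choose r hr using fun v => hx v (Set.mem_univ v)
    obtain rfl : x = fun v => (r v : ℂ) := by ext v; exact (hr v).symm
    simpa using h r

theorem MvPolynomial.coeff_bind₁_indicator_X {R σ : Type*} [CommSemiring R] (S : Set σ)
    (p : MvPolynomial σ R) {d : σ →₀ ℕ} (hd : ∀ v ∈ S, d v = 0) :
    coeff d (bind₁ (Sᶜ.indicator X) p) = coeff d p := by
  classical
  induction p using MvPolynomial.induction_on' with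
  | add p q hp hq => simp only [map_add, coeff_add, hp, hq]
  | monomial s a =>
    rw [bind₁_monomial]
    by_cases hs : ∀ v ∈ S, s v = 0
    · rw [monomial_eq, Finsupp.prod]
      congr 2
      refine Finset.prod_congr rfl fun v hv => ?_
      have hvS : v ∈ Sᶜ := fun hvS => Finsupp.mem_support_iff.1 hv (hs v hvS)
      rw [Set.indicator_of_mem hvS]
    · push Not at hs
      obtain ⟨v, hvS, hv⟩ := hs
      have hsd : s ≠ d := fun h => hv (h ▸ hd v hvS)
      rw [Finset.prod_eq_zero (Finsupp.mem_support_iff.2 hv)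
        (by rw [Set.indicator_of_notMem (not_not_intro hvS), zero_pow hv]),
        mul_zero, coeff_zero, coeff_monomial, if_neg hsd]

theorem MvPolynomial.coeff_eq_zero_of_eval_ofReal_eq_zero_on {σ : Type*} (S : Set σ)
    {p : MvPolynomial σ ℂ}
    (h : ∀ q : σ → ℝ, (∀ v ∈ S, q v = 0) → eval (fun v => (q v : ℂ)) p = 0)
    {d : σ →₀ ℕ} (hd : ∀ v ∈ S, d v = 0) : coeff d p = 0 := by
  have hkill : bind₁ (Sᶜ.indicator X) p = 0 := eq_zero_of_eval_ofReal_eq_zero fun q => by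
    change eval₂Hom (RingHom.id ℂ) _ (bind₁ _ p) = 0
    rw [eval₂Hom_bind₁]
    have hpoint : (fun v => eval₂Hom (RingHom.id ℂ) (fun v => (q v : ℂ)) (Sᶜ.indicator X v)) =
        fun v => ((Sᶜ.indicator q v : ℝ) : ℂ) := by
      funext v
      by_cases hv : v ∈ S <;> simp [hv]
    rw [hpoint]
    exact h _ fun v hv => Set.indicator_of_notMem (not_not_intro hv) q
  rw [← coeff_bind₁_indicator_X S p hd, hkill, coeff_zero]

theorem coeff_Epol {n k m : ℕ} (ε : Fin (n + 1) → Matrix (Fin m) (Fin m) ℂ) (i : Fin k)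
    (ψ : Fin m → MvPolynomial (Fin (n + 1) × Fin k) ℂ) (u : Fin m)
    (d : Fin (n + 1) × Fin k →₀ ℕ) :
    coeff d (Epol ε i ψ u) = ∑ α, ((d (α, i) : ℂ) + 1) *
      (ε α *ᵥ fun v => coeff (d + Finsupp.single (α, i) 1) (ψ v)) u := by
  simp only [Epol, coeff_sum, coeff_C_mul, coeff_pderiv, Matrix.mulVec, dotProduct,
    Finset.mul_sum]
  refine Finset.sum_congr rfl fun α _ => Finset.sum_congr rfl fun v _ => by ring

theorem eq_zero_of_Epol_eq_zero {n k m : ℕ} {ε : Fin (n + 1) → Matrix (Fin m) (Fin m) ℂ}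
    {ψ : Fin m → MvPolynomial (Fin (n + 1) × Fin k) ℂ} (α₀ : Fin (n + 1)) (hε : IsUnit (ε α₀))
    (hE : ∀ i, Epol ε i ψ = 0)
    (h₀ : ∀ d : Fin (n + 1) × Fin k →₀ ℕ, (∀ i, d (α₀, i) = 0) → ∀ v, coeff d (ψ v) = 0) :
    ψ = 0 := by
  classical
  let w : Fin (n + 1) × Fin k → ℕ := fun v => if v.1 = α₀ then 1 else 0
  have weight_eq_zero {d : Fin (n + 1) × Fin k →₀ ℕ} :
      Finsupp.weight w d = 0 ↔ ∀ i, d (α₀, i) = 0 := by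
    simp only [Finsupp.weight_eq_sum, Finset.sum_eq_zero_iff, Finset.mem_univ, true_implies,
      smul_eq_mul, mul_eq_zero, w, Prod.forall]
    exact ⟨fun h i => (h α₀ i).resolve_right (by simp), fun h a i => by
      by_cases ha : a = α₀ <;> simp [ha, h]⟩
  suffices ∀ N d, Finsupp.weight w d = N → (fun v => coeff d (ψ v)) = 0 by
    ext v d; exact congrFun (this _ d rfl) v
  intro N
  induction N with
  | zero => intro d hd; ext v; exact h₀ d (weight_eq_zero.1 hd) v
  | succ N ih =>
    intro d hd
    obtain ⟨i, hi⟩ : ∃ i, d (α₀, i) ≠ 0 := by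
      by_contra! h
      rw [weight_eq_zero.2 h] at hd
      exact N.succ_ne_zero hd.symm
    obtain ⟨d', rfl⟩ : ∃ d', d = d' + Finsupp.single (α₀, i) 1 :=
      ⟨_, (Finsupp.sub_add_single_one_cancel hi).symm⟩
    have hd' : Finsupp.weight w d' = N := by simpa [Finsupp.weight_single, w] using hd
    have hlower : ∀ α ≠ α₀, (fun v => coeff (d' + Finsupp.single (α, i) 1) (ψ v)) = 0 :=
      fun α hα => ih _ (by simp [Finsupp.weight_single, hd', w, hα])
    have hsmul : ((d' (α₀, i) : ℂ) + 1) •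
        (ε α₀ *ᵥ fun v => coeff (d' + Finsupp.single (α₀, i) 1) (ψ v)) = 0 := by
      ext u
      have := coeff_Epol ε i ψ u d'
      rw [hE i, Pi.zero_apply, coeff_zero, Finset.sum_eq_single α₀
        (fun α _ hα => by rw [hlower α hα, Matrix.mulVec_zero, Pi.zero_apply, mul_zero])
        (by simp)] at this
      exact this.symm
    rw [smul_eq_zero, or_iff_right (Nat.cast_add_one_ne_zero _)] at hsmul
    exact Matrix.mulVec_injective_iff_isUnit.2 hε (by rw [hsmul, Matrix.mulVec_zero])

theorem monogenic_determined_by_restriction_general {n k m : ℕ}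
    (ε : Fin (n + 1) → Matrix (Fin m) (Fin m) ℂ)
    (hcl : ∀ α β, ε α * ε β + ε β * ε α =
      if α = β then (-2 : ℂ) • (1 : Matrix (Fin m) (Fin m) ℂ) else 0)
    (ψ : Fin m → MvPolynomial (Fin (n + 1) × Fin k) ℂ)
    (hE : ∀ i : Fin k, Epol ε i ψ = 0)
    (hres : ∀ q : (Fin (n + 1) × Fin k) → ℝ, (∀ i : Fin k, q (Fin.last n, i) = 0) →
      ∀ u : Fin m, eval (fun v => (q v : ℂ)) (ψ u) = 0) :
    ψ = 0 := by
  set ε₀ := ε (Fin.last n)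
  have hsq : ε₀ * ε₀ = -1 := by
    have h := hcl (Fin.last n) (Fin.last n)
    rw [if_pos rfl, ← two_smul ℂ, neg_smul, ← smul_neg] at h
    exact smul_right_injective _ two_ne_zero h
  have hunit : IsUnit ε₀ := (Matrix.isUnit_iff_isUnit_det _).2
    (Matrix.isUnit_det_of_left_inverse (B := -ε₀) (by rw [neg_mul, hsq, neg_neg]))
  exact eq_zero_of_Epol_eq_zero (Fin.last n) hunit hE fun d hd u =>
    coeff_eq_zero_of_eval_ofReal_eq_zero_on (Set.range (Fin.last n, ·))
      (fun q hq => hres q (Set.forall_mem_range.1 hq) u) (Set.forall_mem_range.2 hd)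

/-- A (polynomial) monogenic function vanishing on the subspace
`{x_{n+1,1} = … = x_{n+1,k} = 0}` is identically zero: a monogenic function is
uniquely determined by its restriction to `M(n,k,ℝ)`. -/
theorem monogenic_determined_by_restriction {n k m : ℕ} (hk : 2 ≤ k) (hn : 2 ≤ n)
    (ε : Fin (n + 1) → Matrix (Fin m) (Fin m) ℂ)
    (hcl : ∀ α β, ε α * ε β + ε β * ε α =
      if α = β then (-2 : ℂ) • (1 : Matrix (Fin m) (Fin m) ℂ) else 0)
    (ψ : Fin m → MvPolynomial (Fin (n + 1) × Fin k) ℂ)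
    (hE : ∀ i : Fin k, Epol ε i ψ = 0)
    (hres : ∀ q : (Fin (n + 1) × Fin k) → ℝ, (∀ i : Fin k, q (Fin.last n, i) = 0) →
      ∀ u : Fin m, eval (fun v => (q v : ℂ)) (ψ u) = 0) :
    ψ = 0 :=
  monogenic_determined_by_restriction_general ε hcl ψ hE hres
end

section
/- Let Ψ : 𝒜 → 𝕊 be a non-constant polynomial monogenic spinor, i.e. D_iΨ := Σ_{α=1}^{n+1} ε_α·L_{αi}Ψ = 0 for all i = 1,…,k. Then Ψ cannot depend only on the variables y_{rs} (1 ≤ r < s ≤ k) and x_{n+1,i} (i = 1,…,k); equivalently, any monogenic spinor Ψ with ∂_{x_{αi}}Ψ = 0 for all α = 1,…,n and i = 1,…,k is constant. -/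
open MvPolynomial

/-- Variables: the `x_{αi}` and the `y_{rs}` with `r < s`. -/
abbrev Var (n k : ℕ) := (Fin (n + 1) × Fin k) ⊕ {p : Fin k × Fin k // p.1 < p.2}

/-- The weight of a variable: `1` for the `x`-variables, `2` for the `y`-variables. -/
def wvar (n k : ℕ) : Var n k → ℕ
  | Sum.inl _ => 1
  | Sum.inr _ => 2

/-- The signed derivative `∂_{y_{ij}}` (convention `y_{sr} = −y_{rs}`, `∂_{y_{ii}} = 0`). -/
noncomputable def pdYp {n k : ℕ} (i j : Fin k) (p : MvPolynomial (Var n k) ℂ) :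
    MvPolynomial (Var n k) ℂ :=
  if h : i < j then pderiv (Sum.inr ⟨(i, j), h⟩) p
  else if h' : j < i then -pderiv (Sum.inr ⟨(j, i), h'⟩) p
  else 0

/-- `L_{αi} = ∂_{x_{αi}} − ½ Σ_t x_{αt} ∂_{y_{it}}`. -/
noncomputable def Lop {n k : ℕ} (α : Fin (n + 1)) (i : Fin k)
    (p : MvPolynomial (Var n k) ℂ) : MvPolynomial (Var n k) ℂ :=
  pderiv (Sum.inl (α, i)) p -
    C (1 / 2 : ℂ) * ∑ t : Fin k, X (Sum.inl (α, t)) * pdYp i t p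

/-- The `i`-th component `D_i = Σ_α ε_α · L_{αi}` of the `k`-Dirac operator, acting on
`𝕊`-valued polynomials on `𝒜` (the spinor space `𝕊 = ℂ^m` with Clifford multiplication
by the matrices `ε α`). -/
noncomputable def Dop {n k m : ℕ} (ε : Fin (n + 1) → Matrix (Fin m) (Fin m) ℂ) (i : Fin k)
    (Ψ : Fin m → MvPolynomial (Var n k) ℂ) : Fin m → MvPolynomial (Var n k) ℂ :=
  fun u => ∑ α : Fin (n + 1), ∑ v : Fin m, C (ε α u v) * Lop α i (Ψ v)

/-!
Differentiating `D_i Ψ = 0` in a variable `x_{βt}` with `β ≤ n` on which `Ψ` does not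
depend kills every term except the one coming from the coefficient `x_{βt}` of `L_{βi}`,
leaving `ε_β · ∂_{y_{it}} Ψ = 0`. Since `ε_β² = -1`, Clifford multiplication by `ε_β` is
injective, so `Ψ` does not depend on `y`. Then `D_i Ψ = ε_{n+1} · ∂_{x_{n+1,i}} Ψ`, so `Ψ`
does not depend on the last row of `x` either, and a polynomial with all partial derivatives
zero is constant.
-/

namespace MvPolynomial

variable {σ R : Type*}

theorem pderiv_comm [CommSemiring R] (a b : σ) (p : MvPolynomial σ R) :
    pderiv a (pderiv b p) = pderiv b (pderiv a p) := by
  classical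
  induction p using MvPolynomial.induction_on with
  | C c => simp
  | add p q hp hq => simp [hp, hq]
  | mul_X p i hp =>
    have hX : ∀ c d : σ, pderiv c (pderiv d (X i) : MvPolynomial σ R) = 0 := by
      intro c d
      rcases eq_or_ne i d with rfl | h
      · simp
      · rw [pderiv_X_of_ne h, map_zero]
    simp only [pderiv_mul, map_add, hp, hX]
    ring

theorem eq_C_of_forall_pderiv_eq_zero [CommSemiring R] [CharZero R] [NoZeroDivisors R]
    {p : MvPolynomial σ R} (h : ∀ i, pderiv i p = 0) : p = C (coeff 0 p) := by
  classical
  ext d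
  rw [coeff_C]
  split_ifs with hd
  · rw [hd]
  obtain ⟨i, hi⟩ : ∃ i, d i ≠ 0 := by
    by_contra! hcon
    exact hd (Finsupp.ext fun j => (hcon j).symm)
  have hcoeff := congrArg (coeff (d - Finsupp.single i 1)) (h i)
  rw [coeff_pderiv, coeff_zero,
    tsub_add_cancel_of_le (Finsupp.single_le_iff.mpr (Nat.one_le_iff_ne_zero.mpr hi))] at hcoeff
  exact (mul_eq_zero.mp hcoeff).resolve_right (Nat.cast_add_one_ne_zero _)

end MvPolynomial

theorem mul_self_eq_neg_one_of_add_self {A : Type*} [Ring A] [Module ℂ A] {e : A}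
    (h : e * e + e * e = (-2 : ℂ) • (1 : A)) : e * e = -1 := by
  rw [← two_smul ℂ, show (-2 : ℂ) = 2 * -1 by norm_num, mul_smul] at h
  simpa using smul_right_injective A two_ne_zero h

open scoped Matrix

theorem RingHom.eq_zero_of_mapMatrix_mulVec_eq_zero {ι R S : Type*} [Fintype ι] [DecidableEq ι]
    [Ring R] [Ring S] (φ : R →+* S) {E : Matrix ι ι R} (hE : E * E = -1) {f : ι → S}
    (h : φ.mapMatrix E *ᵥ f = 0) : f = 0 := by
  have hsq : φ.mapMatrix E * φ.mapMatrix E = -1 := by rw [← map_mul, hE, map_neg, map_one]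
  have h2 := congrArg (φ.mapMatrix E *ᵥ ·) h
  simp only [Matrix.mulVec_mulVec, hsq, Matrix.neg_mulVec, Matrix.one_mulVec, Matrix.mulVec_zero,
    neg_eq_zero] at h2
  exact h2

section Heisenberg

variable {n k m : ℕ}

theorem pderiv_pdYp (d : Var n k) (i j : Fin k) (p : MvPolynomial (Var n k) ℂ) :
    pderiv d (pdYp i j p) = pdYp i j (pderiv d p) := by
  unfold pdYp
  split_ifs <;> simp [pderiv_comm d]

theorem pdYp_zero (i j : Fin k) : pdYp i j (0 : MvPolynomial (Var n k) ℂ) = 0 := by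
  unfold pdYp
  split_ifs <;> simp

theorem pderiv_Lop_of_pderiv_eq_zero {β : Fin (n + 1)} {t : Fin k}
    {p : MvPolynomial (Var n k) ℂ} (hp : pderiv (Sum.inl (β, t)) p = 0) (α : Fin (n + 1))
    (i : Fin k) :
    pderiv (Sum.inl (β, t)) (Lop α i p) =
      if α = β then -(C (1 / 2 : ℂ) * pdYp i t p) else 0 := by
  have hterm : ∀ s : Fin k, pderiv (Sum.inl (β, t)) (X (Sum.inl (α, s)) * pdYp i s p) =
      if (α, s) = (β, t) then pdYp i s p else 0 := by
    intro s
    rw [pderiv_mul, pderiv_pdYp, hp, pdYp_zero, mul_zero, add_zero, pderiv_X]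
    split_ifs <;> simp_all
  unfold Lop
  rw [map_sub, pderiv_comm, hp, map_zero, zero_sub, pderiv_C_mul, map_sum,
    Finset.sum_congr rfl fun s _ => hterm s]
  split_ifs with hα
  · subst hα
    simp
  · simp [hα]

theorem pderiv_Dop_of_pderiv_eq_zero (ε : Fin (n + 1) → Matrix (Fin m) (Fin m) ℂ)
    {Ψ : Fin m → MvPolynomial (Var n k) ℂ} {β : Fin (n + 1)} {t : Fin k}
    (hΨ : ∀ v, pderiv (Sum.inl (β, t)) (Ψ v) = 0) (i : Fin k) (u : Fin m) :
    pderiv (Sum.inl (β, t)) (Dop ε i Ψ u) =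
      -(C (1 / 2 : ℂ) *
        ((C : ℂ →+* _).mapMatrix (ε β) *ᵥ fun v => pdYp i t (Ψ v)) u) := by
  simp only [Dop, map_sum, pderiv_C_mul, pderiv_Lop_of_pderiv_eq_zero (hΨ _), mul_ite,
    mul_zero]
  rw [Finset.sum_comm]
  simp only [Finset.sum_ite_eq', Finset.mem_univ, if_true, Matrix.mulVec, dotProduct,
    RingHom.mapMatrix_apply, Matrix.map_apply, Finset.mul_sum, ← Finset.sum_neg_distrib]
  exact Finset.sum_congr rfl fun v _ => by ring

theorem pdYp_eq_zero_of_Dop_eq_zero {ε : Fin (n + 1) → Matrix (Fin m) (Fin m) ℂ}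
    {Ψ : Fin m → MvPolynomial (Var n k) ℂ} {β : Fin (n + 1)} (hβ : ε β * ε β = -1)
    (hD : ∀ i, Dop ε i Ψ = 0) (hΨ : ∀ t v, pderiv (Sum.inl (β, t)) (Ψ v) = 0)
    (i t : Fin k) (v : Fin m) : pdYp i t (Ψ v) = 0 := by
  refine congrFun (C.eq_zero_of_mapMatrix_mulVec_eq_zero hβ 
    (f := fun v => pdYp i t (Ψ v)) ?_) v
  funext u
  have h := pderiv_Dop_of_pderiv_eq_zero ε (hΨ t) i u
  rw [hD i, Pi.zero_apply, map_zero, eq_comm, neg_eq_zero] at h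
  refine (mul_eq_zero.mp h).resolve_left ?_
  rw [map_eq_zero_iff _ (C_injective _ _)]
  norm_num

theorem Lop_eq_pderiv_of_pdYp_eq_zero {p : MvPolynomial (Var n k) ℂ} {i : Fin k}
    (hp : ∀ t, pdYp i t p = 0) (α : Fin (n + 1)) : Lop α i p = pderiv (Sum.inl (α, i)) p := by
  simp [Lop, hp]

theorem Dop_eq_mulVec_pderiv_last (ε : Fin (n + 1) → Matrix (Fin m) (Fin m) ℂ)
    {Ψ : Fin m → MvPolynomial (Var n k) ℂ} (i : Fin k) (hy : ∀ t v, pdYp i t (Ψ v) = 0)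
    (hx : ∀ (α : Fin n) v, pderiv (Sum.inl (α.castSucc, i)) (Ψ v) = 0) :
    Dop ε i Ψ = (C : ℂ →+* _).mapMatrix (ε (Fin.last n)) *ᵥ
      fun v => pderiv (Sum.inl (Fin.last n, i)) (Ψ v) := by
  ext u
  simp [Dop, Lop_eq_pderiv_of_pdYp_eq_zero (hy · _), Fin.sum_univ_castSucc, hx,
    Matrix.mulVec, dotProduct]

theorem pderiv_eq_zero_of_pderiv_inl_eq_zero_of_pdYp_eq_zero {p : MvPolynomial (Var n k) ℂ}
    (hx : ∀ α i, pderiv (Sum.inl (α, i)) p = 0) (hy : ∀ i j, pdYp i j p = 0) :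
    ∀ b, pderiv b p = 0
  | Sum.inl (α, i) => hx α i
  | Sum.inr ⟨(r, s), hrs⟩ => by simpa [pdYp, hrs] using hy r s

end Heisenberg

theorem monogenic_in_y_and_last_row_is_constant_general {n k m : ℕ} (hn : 2 ≤ n)
    (ε : Fin (n + 1) → Matrix (Fin m) (Fin m) ℂ)
    (hcl : ∀ α β, ε α * ε β + ε β * ε α =
      if α = β then (-2 : ℂ) • (1 : Matrix (Fin m) (Fin m) ℂ) else 0)
    (Ψ : Fin m → MvPolynomial (Var n k) ℂ)
    (hD : ∀ i : Fin k, Dop ε i Ψ = 0)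
    (hx : ∀ (α : Fin (n + 1)), (α : ℕ) < n → ∀ (i : Fin k) (u : Fin m),
      MvPolynomial.pderiv (Sum.inl (α, i)) (Ψ u) = 0) :
    ∀ u : Fin m, ∃ c : ℂ, Ψ u = MvPolynomial.C c := by
  have hsq : ∀ α, ε α * ε α = -1 := fun α =>
    mul_self_eq_neg_one_of_add_self (by simpa using hcl α α)
  have hinit : ∀ (α : Fin n) i v, pderiv (Sum.inl (α.castSucc, i)) (Ψ v) = 0 :=
    fun α => hx α.castSucc α.isLt
  have hy : ∀ i t v, pdYp i t (Ψ v) = 0 :=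
    pdYp_eq_zero_of_Dop_eq_zero (hsq _) hD (hinit ⟨0, by omega⟩)
  have hlast : ∀ i v, pderiv (Sum.inl (Fin.last n, i)) (Ψ v) = 0 := fun i =>
    congrFun <| C.eq_zero_of_mapMatrix_mulVec_eq_zero (hsq _) <| by
      rw [← Dop_eq_mulVec_pderiv_last ε i (hy i) (hinit · i)]
      exact hD i
  intro u
  refine ⟨_, MvPolynomial.eq_C_of_forall_pderiv_eq_zero <|
    pderiv_eq_zero_of_pderiv_inl_eq_zero_of_pdYp_eq_zero (fun α i => ?_) (hy · · u)⟩
  induction α using Fin.lastCases with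
  | last => exact hlast i u
  | cast α => exact hinit α i u

/-- A monogenic spinor depending only on the variables `y_{rs}` and `x_{n+1,i}`
(equivalently, with `∂_{x_{αi}}Ψ = 0` for all `α = 1,…,n` and all `i`) is constant. -/
theorem monogenic_in_y_and_last_row_is_constant {n k m : ℕ} (hk : 2 ≤ k) (hn : 2 ≤ n)
    (ε : Fin (n + 1) → Matrix (Fin m) (Fin m) ℂ)
    (hcl : ∀ α β, ε α * ε β + ε β * ε α =
      if α = β then (-2 : ℂ) • (1 : Matrix (Fin m) (Fin m) ℂ) else 0)
    (Ψ : Fin m → MvPolynomial (Var n k) ℂ)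
    (hD : ∀ i : Fin k, Dop ε i Ψ = 0)
    (hx : ∀ (α : Fin (n + 1)), (α : ℕ) < n → ∀ (i : Fin k) (u : Fin m),
      MvPolynomial.pderiv (Sum.inl (α, i)) (Ψ u) = 0) :
    ∀ u : Fin m, ∃ c : ℂ, Ψ u = MvPolynomial.C c :=
  monogenic_in_y_and_last_row_is_constant_general hn ε hcl Ψ hD hx
end
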